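/- Let N ≥ 1, let x_1, …, x_N ∈ ℝ, and let ν_0 > 0, s_0² > 0, κ_0 > 0, m_0 ∈ ℝ. Define ν' = ν_0 + N, κ' = κ_0 + N, m' = (κ_0 m_0 + ∑_n x_n)/κ', and s'² = (ν_0 s_0² + κ_0 m_0² + ∑_n x_n² − κ' m'²)/ν', and assume s'² > 0. Then ∫_0^∞ ∫_ℝ ∏_{n=1}^N N(x_n ∣ μ, σ²) · NIX(μ, σ² ∣ ν_0, s_0², κ_0, m_0) dμ d(σ²) = (2π)^{−N/2} · Z(ν', s'², κ', m') / Z(ν_0, s_0², κ_0, m_0), where N(x ∣ μ, σ²) = (2πσ²)^{−1/2} exp(−(x−μ)²/(2σ²)), NIX(μ, σ² ∣ ν, s², κ, m) = N(μ ∣ m, σ²/κ) · χ⁻²(σ² ∣ ν, s²) with χ⁻²(v ∣ ν, τ) = ((ντ/2)^{ν/2}/Γ(ν/2)) v^{−(ν/2+1)} e^{−ντ/(2v)}, and Z(ν, s², κ, m) = κ^{−1/2} Γ(ν/2) (ν s²/2)^{−ν/2}. -/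

import Mathlib

open Real Finset MeasureTheory

/-- Scalar Gaussian density `N(x ∣ μ, σ²)`. -/
noncomputable def gauss1 (x μ σ2 : ℝ) : ℝ :=
  (2 * Real.pi * σ2) ^ (-(1 : ℝ) / 2) * Real.exp (-(x - μ) ^ 2 / (2 * σ2))

/-- Scaled inverse chi-squared density `χ⁻²(v ∣ ν, τ)`. -/
noncomputable def scaledInvChiSq (v ν τ : ℝ) : ℝ :=
  ((ν * τ / 2) ^ (ν / 2) / Real.Gamma (ν / 2)) * v ^ (-(ν / 2 + 1)) *
    Real.exp (-(ν * τ) / (2 * v))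

/-- Normal-inverse-chi-squared density `NIX(μ, σ² ∣ ν, s², κ, m)`. -/
noncomputable def nix (μ σ2 ν s2 κ m : ℝ) : ℝ :=
  gauss1 μ m (σ2 / κ) * scaledInvChiSq σ2 ν s2

/-- Normalizer `Z(ν, s², κ, m)` of the normal-inverse-chi-squared family. -/
noncomputable def nixZ (ν s2 κ _m : ℝ) : ℝ :=
  κ ^ (-(1 : ℝ) / 2) * Real.Gamma (ν / 2) * (ν * s2 / 2) ^ (-(ν / 2))

/-! For fixed `σ²`, completing the square in `μ` turns the likelihood times the Gaussian prior on
`μ` into a Gaussian in `μ` of precision `κ'/σ²` centred at `m'`, times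
`exp (-(ν' s'² - ν₀ s₀²) / (2σ²))`. Integrating out `μ` therefore leaves an unnormalized scaled
inverse-χ² density in `σ²` with parameters `ν'`, `s'²`, and the substitution `σ² = 1/t` turns its
integral into Euler's integral `Γ(ν'/2) (ν' s'²/2)^(-ν'/2)`. -/

lemma integral_rpow_neg_mul_exp_neg_div_Ioi {a b : ℝ} (ha : 0 < a) (hb : 0 < b) :
    ∫ v in Set.Ioi (0 : ℝ), v ^ (-(a + 1)) * exp (-(b / v)) = Gamma a * b ^ (-a) := by
  rw [← integral_comp_rpow_Ioi _ (p := -1) (by norm_num),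
    setIntegral_congr_fun measurableSet_Ioi (g := fun t ↦ t ^ (a - 1) * exp (-(b * t))),
    integral_rpow_mul_exp_neg_mul_Ioi ha hb, one_div, inv_rpow hb.le, ← rpow_neg hb.le, mul_comm]
  intro t (ht : 0 < t)
  have hpow : (t ^ (-1 : ℝ)) ^ (-(a + 1)) = t ^ (a + 1) := by
    rw [← rpow_mul ht.le]
    ring_nf
  simp only [smul_eq_mul, abs_neg, abs_one, one_mul]
  rw [hpow, rpow_neg_one, div_inv_eq_mul, ← mul_assoc, ← rpow_add ht]
  ring_nf

lemma integral_exp_neg_mul_sub_sq (b c : ℝ) :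
    ∫ μ : ℝ, exp (-b * (μ - c) ^ 2) = √(π / b) := by
  rw [← integral_gaussian b]
  exact integral_sub_right_eq_self (fun μ ↦ exp (-b * μ ^ 2)) c

lemma rpow_neg_half_eq_inv_sqrt {t : ℝ} (ht : 0 ≤ t) : t ^ (-(1 : ℝ) / 2) = (√t)⁻¹ := by
  rw [neg_div, rpow_neg ht, sqrt_eq_rpow]

section Likelihood

variable {ι : Type*} [Fintype ι] (x : ι → ℝ)

lemma prod_gauss1 (μ : ℝ) {σ2 : ℝ} (hσ2 : 0 ≤ σ2) :
    ∏ i, gauss1 (x i) μ σ2 =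
      (2 * π * σ2) ^ (-(Fintype.card ι : ℝ) / 2) * exp (-(∑ i, (x i - μ) ^ 2) / (2 * σ2)) := by
  simp only [gauss1, prod_mul_distrib, prod_const, ← exp_sum, ← sum_div, sum_neg_distrib,
    card_univ]
  rw [← rpow_natCast, ← rpow_mul (by positivity)]
  congr 2
  ring

lemma sum_sub_sq_add_mul_sub_sq (κ m μ : ℝ) (hκ : κ + Fintype.card ι ≠ 0) :
    ∑ i, (x i - μ) ^ 2 + κ * (μ - m) ^ 2 =
      (κ + Fintype.card ι) * (μ - (κ * m + ∑ i, x i) / (κ + Fintype.card ι)) ^ 2 +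
        (κ * m ^ 2 + ∑ i, x i ^ 2 - (κ * m + ∑ i, x i) ^ 2 / (κ + Fintype.card ι)) := by
  have hexpand :
      ∑ i, (x i - μ) ^ 2 = ∑ i, x i ^ 2 - 2 * μ * ∑ i, x i + Fintype.card ι * μ ^ 2 := by
    simp only [sub_sq, sum_add_distrib, sum_sub_distrib, sum_const, card_univ, nsmul_eq_mul,
      ← sum_mul, ← mul_sum]
    ring
  rw [hexpand]
  field_simp
  ring

lemma integral_prod_gauss1_mul_gauss1 (m : ℝ) {σ2 κ : ℝ} (hσ2 : 0 < σ2) (hκ : 0 < κ) :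
    ∫ μ, (∏ i, gauss1 (x i) μ σ2) * gauss1 μ m (σ2 / κ) =
      (2 * π * σ2) ^ (-(Fintype.card ι : ℝ) / 2) * √(κ / (κ + Fintype.card ι)) *
        exp (-(κ * m ^ 2 + ∑ i, x i ^ 2 - (κ * m + ∑ i, x i) ^ 2 / (κ + Fintype.card ι)) /
          (2 * σ2)) := by
  set K := κ + Fintype.card ι
  set R := κ * m ^ 2 + ∑ i, x i ^ 2 - (κ * m + ∑ i, x i) ^ 2 / K
  have hK : 0 < K := by positivity
  have hpoint (μ : ℝ) : (∏ i, gauss1 (x i) μ σ2) * gauss1 μ m (σ2 / κ) =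
      ((2 * π * σ2) ^ (-(Fintype.card ι : ℝ) / 2) * (2 * π * (σ2 / κ)) ^ (-(1 : ℝ) / 2) *
        exp (-R / (2 * σ2))) * exp (-(K / (2 * σ2)) * (μ - (κ * m + ∑ i, x i) / K) ^ 2) := by
    have hexponent : -(∑ i, (x i - μ) ^ 2) / (2 * σ2) + -(μ - m) ^ 2 / (2 * (σ2 / κ)) =
        -R / (2 * σ2) + -(K / (2 * σ2)) * (μ - (κ * m + ∑ i, x i) / K) ^ 2 :=
      calc _ = -(∑ i, (x i - μ) ^ 2 + κ * (μ - m) ^ 2) / (2 * σ2) := by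
              field_simp
              ring
        _ = _ := by
              rw [sum_sub_sq_add_mul_sub_sq x κ m μ hK.ne']
              ring
    rw [prod_gauss1 x μ hσ2.le, gauss1, mul_mul_mul_comm, ← exp_add, hexponent, exp_add]
    ring
  have hsqrt : (2 * π * (σ2 / κ)) ^ (-(1 : ℝ) / 2) * √(π / (K / (2 * σ2))) = √(κ / K) := by
    rw [rpow_neg_half_eq_inv_sqrt (by positivity), ← sqrt_inv, ← sqrt_mul (by positivity)]
    congr 1
    field_simp
  simp_rw [hpoint]
  rw [integral_const_mul, integral_exp_neg_mul_sub_sq, ← hsqrt]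
  ring

lemma integral_prod_gauss1_mul_nix (ν s2 m : ℝ) {σ2 κ : ℝ} (hσ2 : 0 < σ2) (hκ : 0 < κ) :
    ∫ μ, (∏ i, gauss1 (x i) μ σ2) * nix μ σ2 ν s2 κ m =
      (2 * π) ^ (-(Fintype.card ι : ℝ) / 2) * √(κ / (κ + Fintype.card ι)) *
        ((ν * s2 / 2) ^ (ν / 2) / Gamma (ν / 2)) *
        (σ2 ^ (-((ν + Fintype.card ι) / 2 + 1)) *
          exp (-((ν * s2 + (κ * m ^ 2 + ∑ i, x i ^ 2 -
            (κ * m + ∑ i, x i) ^ 2 / (κ + Fintype.card ι))) / 2 / σ2))) := by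
  have hexponent (R : ℝ) : -((ν * s2 + R) / 2 / σ2) = -R / (2 * σ2) + -(ν * s2) / (2 * σ2) := by
    field_simp
    ring
  simp only [nix, ← mul_assoc]
  rw [integral_mul_const, integral_prod_gauss1_mul_gauss1 x m hσ2 hκ, scaledInvChiSq,
    mul_rpow (by positivity) hσ2.le, hexponent, exp_add,
    show -((ν + Fintype.card ι) / 2 + 1) = -(Fintype.card ι : ℝ) / 2 + -(ν / 2 + 1) by ring,
    rpow_add hσ2]
  ring

end Likelihood

theorem nix_marginal_likelihood_general
    (N : ℕ) (x : Fin N → ℝ)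
    (ν0 s02 κ0 m0 : ℝ) (hν0 : 0 < ν0) (hs02 : 0 < s02) (hκ0 : 0 < κ0)
    (ν' κ' m' s'2 : ℝ)
    (hν' : ν' = ν0 + N) (hκ' : κ' = κ0 + N)
    (hm' : m' = (κ0 * m0 + ∑ n, x n) / κ')
    (hs'2 : s'2 = (ν0 * s02 + κ0 * m0 ^ 2 + (∑ n, (x n) ^ 2) - κ' * m' ^ 2) / ν')
    (hs'2pos : 0 < s'2) :
    ∫ σ2 in Set.Ioi (0 : ℝ), ∫ μ : ℝ,
        (∏ n, gauss1 (x n) μ σ2) * nix μ σ2 ν0 s02 κ0 m0 =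
      (2 * Real.pi) ^ (-(N : ℝ) / 2) * nixZ ν' s'2 κ' m' / nixZ ν0 s02 κ0 m0 := by
  have hκ'pos : 0 < κ' := by rw [hκ']; positivity
  have hν'pos : 0 < ν' := by rw [hν']; positivity
  have hposterior : ν0 * s02 + (κ0 * m0 ^ 2 + ∑ n, x n ^ 2 - (κ0 * m0 + ∑ n, x n) ^ 2 / κ') =
      ν' * s'2 := by
    rw [hs'2, hm']
    field_simp
    ring
  rw [setIntegral_congr_fun measurableSet_Ioi
      fun σ2 hσ2 ↦ integral_prod_gauss1_mul_nix x ν0 s02 m0 hσ2 hκ0]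
  simp only [Fintype.card_fin, ← hκ', ← hν', hposterior]
  rw [integral_const_mul, integral_rpow_neg_mul_exp_neg_div_Ioi (by positivity) (by positivity),
    nixZ, nixZ, rpow_neg_half_eq_inv_sqrt hκ0.le, rpow_neg_half_eq_inv_sqrt hκ'pos.le,
    rpow_neg (by positivity), rpow_neg (by positivity), sqrt_div hκ0.le]
  have hΓ := (Gamma_pos_of_pos (half_pos hν0)).ne'
  have hsqrtκ0 := (sqrt_pos.2 hκ0).ne'
  have hprior := (rpow_pos_of_pos (by positivity : 0 < ν0 * s02 / 2) (ν0 / 2)).ne'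
  field_simp

/-- Marginal likelihood under the normal-inverse-chi-squared prior (Appendix D): it
equals `(2π)^{−N/2}` times the ratio of the posterior to the prior normalizer. -/
theorem nix_marginal_likelihood
    (N : ℕ) (hN : 1 ≤ N) (x : Fin N → ℝ)
    (ν0 s02 κ0 m0 : ℝ) (hν0 : 0 < ν0) (hs02 : 0 < s02) (hκ0 : 0 < κ0)
    (ν' κ' m' s'2 : ℝ)
    (hν' : ν' = ν0 + N) (hκ' : κ' = κ0 + N)
    (hm' : m' = (κ0 * m0 + ∑ n, x n) / κ')
    (hs'2 : s'2 = (ν0 * s02 + κ0 * m0 ^ 2 + (∑ n, (x n) ^ 2) - κ' * m' ^ 2) / ν')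
    (hs'2pos : 0 < s'2) :
    ∫ σ2 in Set.Ioi (0 : ℝ), ∫ μ : ℝ,
        (∏ n, gauss1 (x n) μ σ2) * nix μ σ2 ν0 s02 κ0 m0 =
      (2 * Real.pi) ^ (-(N : ℝ) / 2) * nixZ ν' s'2 κ' m' / nixZ ν0 s02 κ0 m0 :=
  nix_marginal_likelihood_general N x ν0 s02 κ0 m0 hν0 hs02 hκ0 ν' κ' m' s'2 hν' hκ' hm' hs'2
    hs'2pos
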